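/- arXiv:1006.0036 — 3 statements merged into one kernel-verified Lean document; each statement's English description precedes it below -/
import Mathlib

section
/- For ψ = z₀u₀ + z₁u₁ + z₂u₂ + z₃u₃ with Σ|z_j|²=1, the eigenvalues of the reduced density matrix Tr_{CD}|ψ⟩⟨ψ| are P_j = |z_j|², the eigenvalues of Tr_{BD}|ψ⟩⟨ψ| are Q_j = |Σ_k A_{jk} z_k|², and the eigenvalues of Tr_{BC}|ψ⟩⟨ψ| are R_j = |Σ_k B_{jk} z_k|², where A = (1/2)[[1,1,1,1],[1,1,−1,−1],[1,−1,1,−1],[1,−1,−1,1]] and B = (1/2)[[1,−1,−1,−1],[1,−1,1,1],[1,1,−1,1],[1,1,1,−1]]. -/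
open Matrix Polynomial

noncomputable section

/-- Bell state amplitudes on two qubits: |φ⁺⟩, |φ⁻⟩, |ψ⁺⟩, |ψ⁻⟩. -/
def bell : Fin 4 → Fin 2 → Fin 2 → ℂ :=
  ![fun a b => if a = b then (Real.sqrt 2)⁻¹ else 0,
    fun a b => if a = b then (if a = 0 then (Real.sqrt 2)⁻¹ else -(Real.sqrt 2)⁻¹) else 0,
    fun a b => if a ≠ b then (Real.sqrt 2)⁻¹ else 0,
    fun a b => if a ≠ b then (if a = 0 then (Real.sqrt 2)⁻¹ else -(Real.sqrt 2)⁻¹) else 0]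

/-- Amplitudes of the state ψ = Σⱼ zⱼ uⱼ, with uⱼ the Bell state `bell j` on qubits (A,B)
    tensored with `bell j` on qubits (C,D); indices ordered A,B,C,D. -/
def psi (z : Fin 4 → ℂ) (a b c d : Fin 2) : ℂ := ∑ j, z j * bell j a b * bell j c d

/-- Reduced density matrix of qubits A,B: partial trace over C,D of |ψ⟩⟨ψ|. -/
def rhoAB (z : Fin 4 → ℂ) : Matrix (Fin 2 × Fin 2) (Fin 2 × Fin 2) ℂ :=
  fun p q => ∑ c, ∑ d, psi z p.1 p.2 c d * (starRingEnd ℂ) (psi z q.1 q.2 c d)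

/-- Reduced density matrix of qubits A,C: partial trace over B,D of |ψ⟩⟨ψ|. -/
def rhoAC (z : Fin 4 → ℂ) : Matrix (Fin 2 × Fin 2) (Fin 2 × Fin 2) ℂ :=
  fun p q => ∑ b, ∑ d, psi z p.1 b p.2 d * (starRingEnd ℂ) (psi z q.1 b q.2 d)

/-- Reduced density matrix of qubits A,D: partial trace over B,C of |ψ⟩⟨ψ|. -/
def rhoAD (z : Fin 4 → ℂ) : Matrix (Fin 2 × Fin 2) (Fin 2 × Fin 2) ℂ :=
  fun p q => ∑ b, ∑ c, psi z p.1 b c p.2 * (starRingEnd ℂ) (psi z q.1 b c q.2)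

/-- The orthogonal matrix A. -/
def Amat : Matrix (Fin 4) (Fin 4) ℂ :=
  (1/2 : ℂ) • !![1,1,1,1; 1,1,-1,-1; 1,-1,1,-1; 1,-1,-1,1]

/-- The orthogonal matrix B. -/
def Bmat : Matrix (Fin 4) (Fin 4) ℂ :=
  (1/2 : ℂ) • !![1,-1,-1,-1; 1,-1,1,1; 1,1,-1,1; 1,1,1,-1]

/-! Each uⱼ is a product of Bell states across the cut AB|CD, so ψ = Σⱼ zⱼ uⱼ is already a Schmidt
decomposition with coefficients zⱼ. Across the cut AC|BD each uⱼ re-expands in the Bell ⊗ Bell basis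
with coefficients given by the j-th column of A, so ψ is again in Schmidt form, now with coefficients
A z; across AD|BC the same happens with B (the Bell labels come in reverse order). The reduced
density matrix of a Schmidt form Σⱼ wⱼ eⱼ ⊗ fⱼ is Σⱼ |wⱼ|² eⱼ eⱼ*, whose eigenvalues are the |wⱼ|². -/

namespace Matrix

theorem transpose_mul_conjTranspose_transpose {α m n : Type*} [Fintype m] [CommSemiring α]
    [StarRing α] (V : Matrix m n α) : Vᵀ * Vᵀᴴ = (Vᴴ * V)ᵀ := by
  rw [transpose_mul, conjTranspose_transpose_eq_transpose_conjTranspose]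

theorem sum_mul_eq_sum_mulVec_mul {R ι κ : Type*} [CommSemiring R] [Fintype ι] [Fintype κ]
    (M : Matrix κ ι R) (z x : ι → R) (y : κ → R) (h : ∀ j, x j = ∑ k, M k j * y k) :
    ∑ j, z j * x j = ∑ k, (M *ᵥ z) k * y k := by
  simp only [h, mulVec, dotProduct, Finset.mul_sum, Finset.sum_mul]
  rw [Finset.sum_comm]
  exact Finset.sum_congr rfl fun _ _ => Finset.sum_congr rfl fun _ _ => by ring

variable {𝕜 n r ι : Type*} [RCLike 𝕜] [Fintype r] [Fintype ι] [DecidableEq ι]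

theorem schmidt_mul_conjTranspose {U : Matrix n ι 𝕜} {V : Matrix r ι 𝕜} (hV : Vᴴ * V = 1)
    (w : ι → 𝕜) :
    (U * diagonal w * Vᵀ) * (U * diagonal w * Vᵀ)ᴴ =
      U * diagonal (fun j => ((‖w j‖ ^ 2 : ℝ) : 𝕜)) * Uᴴ := by
  have hVt : Vᵀ * Vᵀᴴ = 1 := by rw [transpose_mul_conjTranspose_transpose, hV, transpose_one]
  simp only [conjTranspose_mul, diagonal_conjTranspose, Matrix.mul_assoc]
  rw [← Matrix.mul_assoc Vᵀ, hVt, Matrix.one_mul, ← Matrix.mul_assoc (diagonal w),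
    diagonal_mul_diagonal]
  congr 3
  ext j
  simp [RCLike.mul_conj]

variable [Fintype n]

theorem card_le_of_conjTranspose_mul_self_eq_one {U : Matrix n ι 𝕜} (hU : Uᴴ * U = 1) :
    Fintype.card ι ≤ Fintype.card n :=
  calc Fintype.card ι = (Uᴴ * U).rank := by rw [hU, rank_one]
    _ ≤ U.rank := rank_mul_le_right _ _
    _ ≤ Fintype.card n := rank_le_card_height U

theorem charpoly_mul_mul_conjTranspose_of_isometry [DecidableEq n] {U : Matrix n ι 𝕜}
    (hU : Uᴴ * U = 1) (D : Matrix ι ι 𝕜) :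
    (U * D * Uᴴ).charpoly = X ^ (Fintype.card n - Fintype.card ι) * D.charpoly := by
  rw [Matrix.mul_assoc, charpoly_mul_comm_of_le _ _ (card_le_of_conjTranspose_mul_self_eq_one hU),
    Matrix.mul_assoc, hU, Matrix.mul_one]

theorem charpoly_schmidt_mul_conjTranspose [DecidableEq n] {U : Matrix n ι 𝕜} {V : Matrix r ι 𝕜}
    (hU : Uᴴ * U = 1) (hV : Vᴴ * V = 1) (w : ι → 𝕜) :
    ((U * diagonal w * Vᵀ) * (U * diagonal w * Vᵀ)ᴴ).charpoly =
      X ^ (Fintype.card n - Fintype.card ι) * ∏ j, (X - C ((‖w j‖ ^ 2 : ℝ) : 𝕜)) := by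
  rw [schmidt_mul_conjTranspose hV, charpoly_mul_mul_conjTranspose_of_isometry hU,
    charpoly_diagonal]

end Matrix

def bellMatrix : Matrix (Fin 2 × Fin 2) (Fin 4) ℂ := fun p j => bell j p.1 p.2

/-- The state Σⱼ wⱼ bellⱼ ⊗ bellⱼ of two qubit pairs; rows index the first pair, columns the
second. -/
def bellSchmidt (w : Fin 4 → ℂ) : Matrix (Fin 2 × Fin 2) (Fin 2 × Fin 2) ℂ :=
  bellMatrix * diagonal w * bellMatrixᵀ

theorem bellMatrix_conjTranspose_mul_self : bellMatrixᴴ * bellMatrix = 1 := by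
  have h : ((Real.sqrt 2 : ℝ) : ℂ)⁻¹ * ((Real.sqrt 2 : ℝ) : ℂ)⁻¹ = 1 / 2 := by
    rw [← mul_inv, ← Complex.ofReal_mul, Real.mul_self_sqrt zero_le_two]
    norm_num
  ext j k
  fin_cases j <;> fin_cases k <;>
    norm_num [mul_apply, Fintype.sum_prod_type, bellMatrix, bell, one_apply, h]

theorem bellSchmidt_apply (w : Fin 4 → ℂ) (p q : Fin 2 × Fin 2) :
    bellSchmidt w p q = ∑ j, w j * bell j p.1 p.2 * bell j q.1 q.2 := by
  simp only [bellSchmidt, mul_apply, diagonal_apply, bellMatrix, transpose_apply, mul_ite, mul_zero,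
    Finset.sum_ite_eq', Finset.mem_univ, if_true]
  exact Finset.sum_congr rfl fun j _ => by ring

-- Both sides are homogeneous quadratic in 1/√2, so `ring` needs no arithmetic of √2.
theorem bell_mul_bell_eq_sum_Amat (j : Fin 4) (a b c d : Fin 2) :
    bell j a b * bell j c d = ∑ k, Amat k j * (bell k a c * bell k b d) := by
  fin_cases j <;> fin_cases a <;> fin_cases b <;> fin_cases c <;> fin_cases d <;>
    simp [bell, Amat, Fin.sum_univ_four] <;> ring

theorem bell_mul_bell_eq_sum_Bmat (j : Fin 4) (a b c d : Fin 2) :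
    bell j a b * bell j c d = ∑ k, Bmat k j * (bell k.rev a d * bell k.rev b c) := by
  fin_cases j <;> fin_cases a <;> fin_cases b <;> fin_cases c <;> fin_cases d <;>
    simp [bell, Bmat, Fin.sum_univ_four] <;> ring

theorem psi_eq_bellSchmidt (z : Fin 4 → ℂ) (a b c d : Fin 2) :
    psi z a b c d = bellSchmidt z (a, b) (c, d) := by
  simp [bellSchmidt_apply, psi]

theorem psi_eq_bellSchmidt_Amat (z : Fin 4 → ℂ) (a b c d : Fin 2) :
    psi z a b c d = bellSchmidt (Amat *ᵥ z) (a, c) (b, d) := by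
  simp only [psi, bellSchmidt_apply, mul_assoc]
  exact sum_mul_eq_sum_mulVec_mul _ _ _ _ (bell_mul_bell_eq_sum_Amat · a b c d)

theorem psi_eq_bellSchmidt_Bmat (z : Fin 4 → ℂ) (a b c d : Fin 2) :
    psi z a b c d = bellSchmidt ((Bmat *ᵥ z) ∘ Fin.rev) (a, d) (b, c) := by
  simp only [psi, bellSchmidt_apply, mul_assoc]
  rw [sum_mul_eq_sum_mulVec_mul _ _ _ _ (bell_mul_bell_eq_sum_Bmat · a b c d)]
  exact Fintype.sum_equiv Fin.revPerm _ _ fun k => by simp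

theorem rhoAB_eq (z : Fin 4 → ℂ) : rhoAB z = bellSchmidt z * (bellSchmidt z)ᴴ := by
  ext p q
  simp [rhoAB, mul_apply, Fintype.sum_prod_type, psi_eq_bellSchmidt]

theorem rhoAC_eq (z : Fin 4 → ℂ) :
    rhoAC z = bellSchmidt (Amat *ᵥ z) * (bellSchmidt (Amat *ᵥ z))ᴴ := by
  ext p q
  simp [rhoAC, mul_apply, Fintype.sum_prod_type, psi_eq_bellSchmidt_Amat]

theorem rhoAD_eq (z : Fin 4 → ℂ) :
    rhoAD z = bellSchmidt ((Bmat *ᵥ z) ∘ Fin.rev) * (bellSchmidt ((Bmat *ᵥ z) ∘ Fin.rev))ᴴ := by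
  ext p q
  simp [rhoAD, mul_apply, Fintype.sum_prod_type, psi_eq_bellSchmidt_Bmat]

theorem charpoly_bellSchmidt_mul_conjTranspose (w : Fin 4 → ℂ) :
    (bellSchmidt w * (bellSchmidt w)ᴴ).charpoly = ∏ j, (X - C ((‖w j‖ ^ 2 : ℝ) : ℂ)) := by
  rw [bellSchmidt, charpoly_schmidt_mul_conjTranspose bellMatrix_conjTranspose_mul_self
    bellMatrix_conjTranspose_mul_self]
  simp

theorem reduced_density_eigenvalues_general (z : Fin 4 → ℂ) :
    (rhoAB z).charpoly = ∏ j, (X - C (((‖z j‖)^2 : ℝ) : ℂ)) ∧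
    (rhoAC z).charpoly = ∏ j, (X - C (((‖∑ k, Amat j k * z k‖)^2 : ℝ) : ℂ)) ∧
    (rhoAD z).charpoly = ∏ j, (X - C (((‖∑ k, Bmat j k * z k‖)^2 : ℝ) : ℂ)) := by
  refine ⟨?_, ?_, ?_⟩
  · rw [rhoAB_eq, charpoly_bellSchmidt_mul_conjTranspose]
  · rw [rhoAC_eq, charpoly_bellSchmidt_mul_conjTranspose]
    rfl
  · rw [rhoAD_eq, charpoly_bellSchmidt_mul_conjTranspose]
    exact Equiv.prod_comp Fin.revPerm fun j => X - C ((‖(Bmat *ᵥ z) j‖ ^ 2 : ℝ) : ℂ)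

/-- The eigenvalues of the three two-qubit reduced density matrices of
    ψ = Σⱼ zⱼ uⱼ are Pⱼ = |zⱼ|², Qⱼ = |Σₖ Aⱼₖ zₖ|², Rⱼ = |Σₖ Bⱼₖ zₖ|² respectively,
    stated via the characteristic polynomials. -/
theorem reduced_density_eigenvalues (z : Fin 4 → ℂ)
    (hnorm : ∑ j, ‖z j‖ ^ 2 = 1) :
    (rhoAB z).charpoly = ∏ j, (X - C (((‖z j‖)^2 : ℝ) : ℂ)) ∧
    (rhoAC z).charpoly = ∏ j, (X - C (((‖∑ k, Amat j k * z k‖)^2 : ℝ) : ℂ)) ∧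
    (rhoAD z).charpoly = ∏ j, (X - C (((‖∑ k, Bmat j k * z k‖)^2 : ℝ) : ℂ)) :=
  reduced_density_eigenvalues_general z
end
end

section
/- Let α > 0, α ≠ 1, α ≠ 2. Then there do not exist three distinct positive reals λ₀ > λ₁ > λ₂ > 0 and constants μ, ν with α λ_k^{α−1} + μ + 2ν λ_k = 0 for all k = 0,1,2. Equivalently, for 0 < y < x < 1 and α ≥ 0, α ≠ 2, the equality (1 − x^{α−1})/(1 − x) = (1 − y^{α−1})/(1 − y) is impossible, since f(x) = (1 − x^{α−1})/(1 − x) is injective on (0,1). -/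
/-!
Dividing the critical-point equation by `α` shows that `λ ↦ λ ^ (α - 1)` agrees with an affine
function at each of `λ₂ < λ₁ < λ₀`. Since `α - 1 ∉ {0, 1}`, the power function is strictly convex
or strictly concave on `(0, ∞)`, and such a function meets a line in at most two points.
-/

open Set

namespace Real

theorem strictConvexOn_rpow_of_neg {p : ℝ} (hp : p < 0) :
    StrictConvexOn ℝ (Ioi 0) fun x : ℝ ↦ x ^ p := by
  refine strictConvexOn_of_deriv2_pos' (convex_Ioi 0)
    (continuousOn_id.rpow_const fun x hx ↦ Or.inl (ne_of_gt hx)) fun x hx ↦ ?_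
  have hpp : 0 < p * (p - 1) := mul_pos_of_neg_of_neg hp (by linarith)
  simpa [iter_deriv_rpow_const, descPochhammer_succ_right] using
    mul_pos hpp (rpow_pos_of_pos (mem_Ioi.1 hx) (p - 2))

theorem strictConvexOn_or_strictConcaveOn_rpow {p : ℝ} (hp₀ : p ≠ 0) (hp₁ : p ≠ 1) :
    StrictConvexOn ℝ (Ioi 0) (fun x : ℝ ↦ x ^ p) ∨
      StrictConcaveOn ℝ (Ioi 0) (fun x : ℝ ↦ x ^ p) := by
  rcases hp₀.lt_or_gt with hp | hp
  · exact .inl (strictConvexOn_rpow_of_neg hp)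
  rcases hp₁.lt_or_gt with hp' | hp'
  · exact .inr ((strictConcaveOn_rpow hp hp').subset Ioi_subset_Ici_self (convex_Ioi 0))
  · exact .inl ((strictConvexOn_rpow hp').subset Ioi_subset_Ici_self (convex_Ioi 0))

end Real

section Line

variable {s : Set ℝ} {f : ℝ → ℝ} {x y z : ℝ}

theorem StrictConvexOn.ne_line_of_lt_of_lt (hf : StrictConvexOn ℝ s f) (hx : x ∈ s) (hz : z ∈ s)
    (hxy : x < y) (hyz : y < z) (a b : ℝ) (hfx : f x = a * x + b) (hfz : f z = a * z + b) :
    f y ≠ a * y + b := by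
  intro hfy
  have hslope := hf.slope_strict_mono_adjacent hx hz hxy hyz
  rw [hfx, hfy, hfz, show a * y + b - (a * x + b) = a * (y - x) by ring,
    show a * z + b - (a * y + b) = a * (z - y) by ring, mul_div_cancel_right₀ _ (sub_pos.2 hxy).ne',
    mul_div_cancel_right₀ _ (sub_pos.2 hyz).ne'] at hslope
  exact lt_irrefl a hslope

theorem StrictConcaveOn.ne_line_of_lt_of_lt (hf : StrictConcaveOn ℝ s f) (hx : x ∈ s)
    (hz : z ∈ s) (hxy : x < y) (hyz : y < z) (a b : ℝ) (hfx : f x = a * x + b)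
    (hfz : f z = a * z + b) : f y ≠ a * y + b := by
  intro hfy
  refine hf.neg.ne_line_of_lt_of_lt hx hz hxy hyz (-a) (-b) ?_ ?_ ?_ <;>
    simp only [Pi.neg_apply, hfx, hfy, hfz] <;> ring

end Line

/-- For α > 0, α ≠ 1, α ≠ 2, the critical-point equation
    αλ^{α−1} + μ + 2νλ = 0 of the Tsallis-entropy Lagrangian cannot be satisfied
    by three distinct positive reals. -/
theorem no_three_distinct_tsallis_critical_points
    (α : ℝ) (hα0 : 0 < α) (hα1 : α ≠ 1) (hα2 : α ≠ 2) :
    ¬ ∃ (μ ν l0 l1 l2 : ℝ), 0 < l2 ∧ l2 < l1 ∧ l1 < l0 ∧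
      (α * l0 ^ (α - 1) + μ + 2 * ν * l0 = 0) ∧
      (α * l1 ^ (α - 1) + μ + 2 * ν * l1 = 0) ∧
      (α * l2 ^ (α - 1) + μ + 2 * ν * l2 = 0) := by
  rintro ⟨μ, ν, l0, l1, l2, h2, h21, h10, e0, e1, e2⟩
  have on_line : ∀ l, α * l ^ (α - 1) + μ + 2 * ν * l = 0 →
      l ^ (α - 1) = -(2 * ν / α) * l + -(μ / α) := by
    intro l hl
    field_simp
    linarith
  have hl2 : l2 ∈ Ioi 0 := h2
  have hl0 : l0 ∈ Ioi 0 := h2.trans (h21.trans h10)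
  rcases Real.strictConvexOn_or_strictConcaveOn_rpow (sub_ne_zero.2 hα1)
    (fun h ↦ hα2 (by linarith)) with h | h <;>
  exact h.ne_line_of_lt_of_lt hl2 hl0 h21 h10 _ _ (on_line _ e2) (on_line _ e0) (on_line _ e1)
end

section
/- Fix τ ∈ [0, 1] and let λ₀ ≥ λ₁ ≥ λ₂ ≥ λ₃ ≥ 0 with Σλ_k = 1 and 2(1 − Σλ_k²) = τ. For 0 < α < 2 (α ≠ 1), the Tsallis α-entropy (Σλ_k^α − 1)/(1−α) is minimized, over all such distributions, uniquely (up to permutation) by λ = ((1+√(1−τ))/2, (1−√(1−τ))/2, 0, 0). -/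
/-!
Put `a = (1 + √(1 - τ)) / 2` and `b = (1 - √(1 - τ)) / 2`, so `a + b = 1` and
`a² + b² = ∑ λₖ²`. Since `∑_{j ≠ k} λⱼ² ≤ (1 - λₖ)²`, every `λₖ` satisfies
`λₖ² + (1 - λₖ)² ≥ a² + b²`, i.e. no `λₖ` lies strictly between `b` and `a`.

Write `t ^ α / (1 - α) = t * f t` with `f t = t ^ (α - 1) / (1 - α)`, which is strictly convex
on `(0, ∞)` because `α < 2`. The secant `A + B t` of `f` through `b` and `a` (the tangent at `a`
when `b = a` or `b = 0`) lies strictly below `f` off `[b, a]`, so on the admissible values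
`t ^ α / (1 - α) ≥ A t + B t²`, with equality exactly at `0`, `a`, `b`. Summing gives
`∑ λₖ ^ α / (1 - α) ≥ A + B ∑ λₖ² = (a ^ α + b ^ α) / (1 - α)`, a Lagrange-multiplier bound.

In the equality case every `λₖ` lies in `{0, a, b}`. As `λ (1 - λ) = a b` for `λ ∈ {a, b}` while
`∑ λₖ (1 - λₖ) = 2 a b`, at most two entries are nonzero, and ordering pins down `λ = (a, b, 0, 0)`.
-/

open Real Set Finset

theorem StrictConvexOn.exists_affine_lt_off_Icc {S : Set ℝ} {f : ℝ → ℝ}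
    (hf : StrictConvexOn ℝ S f) {u v : ℝ} (hu : u ∈ S) (hv : v ∈ S) (huv : u ≤ v)
    (hfv : DifferentiableAt ℝ f v) :
    ∃ A B : ℝ, f u = A + B * u ∧ f v = A + B * v ∧
      ∀ t ∈ S, t < u ∨ v < t → A + B * t < f t := by
  rcases huv.lt_or_eq with huv | rfl
  · set B := (f v - f u) / (v - u)
    have hB : B * (v - u) = f v - f u := div_mul_cancel₀ _ (sub_pos.2 huv).ne'
    refine ⟨f u - B * u, B, by ring, by linarith, fun t ht htuv => ?_⟩
    rcases htuv with htu | hvt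
    · have h := hf.slope_strict_mono_adjacent ht hv htu huv
      rw [div_lt_iff₀ (sub_pos.2 htu)] at h
      linarith
    · have h := hf.slope_strict_mono_adjacent hu ht huv hvt
      rw [lt_div_iff₀ (sub_pos.2 hvt)] at h
      linarith
  · refine ⟨f u - deriv f u * u, deriv f u, by ring, by ring, fun t ht htu => ?_⟩
    rcases htu with htu | htu
    · have h := hf.slope_lt_deriv ht hu htu hfv
      rw [slope_def_field, div_lt_iff₀ (sub_pos.2 htu)] at h
      linarith
    · have h := hf.deriv_lt_slope hu ht htu hfv
      rw [slope_def_field, lt_div_iff₀ (sub_pos.2 htu)] at h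
      linarith

theorem hasDerivAt_rpow_sub_one_div {α t : ℝ} (hα1 : α ≠ 1) (ht : 0 < t) :
    HasDerivAt (fun s : ℝ => s ^ (α - 1) / (1 - α)) (-t ^ (α - 2)) t := by
  have h := (hasDerivAt_rpow_const (p := α - 1) (Or.inl ht.ne')).div_const (1 - α)
  rw [show α - 1 - 1 = α - 2 by ring] at h
  refine h.congr_deriv ?_
  field_simp [sub_ne_zero.2 hα1.symm]
  ring

theorem strictConvexOn_rpow_sub_one_div {α : ℝ} (hα1 : α ≠ 1) (hα2 : α < 2) :
    StrictConvexOn ℝ (Ioi 0) fun t : ℝ => t ^ (α - 1) / (1 - α) := by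
  refine StrictMonoOn.strictConvexOn_of_deriv (convex_Ioi 0)
    (fun t ht => (hasDerivAt_rpow_sub_one_div hα1 ht).continuousAt.continuousWithinAt) ?_
  rw [interior_Ioi]
  intro s hs t ht hst
  rw [(hasDerivAt_rpow_sub_one_div hα1 hs).deriv, (hasDerivAt_rpow_sub_one_div hα1 ht).deriv]
  exact neg_lt_neg (rpow_lt_rpow_of_neg hs hst (by linarith))

theorem exists_mul_add_mul_sq_le_rpow_div {α a b : ℝ} (hα0 : 0 < α) (hα2 : α < 2)
    (hα1 : α ≠ 1) (hb : 0 ≤ b) (hba : b ≤ a) (ha : 0 < a) :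
    ∃ A B : ℝ, ∀ t, 0 ≤ t → t ≤ b ∨ a ≤ t →
      A * t + B * t ^ 2 ≤ t ^ α / (1 - α) ∧
      (t ^ α / (1 - α) = A * t + B * t ^ 2 ↔ t = 0 ∨ t = a ∨ t = b) := by
  set f : ℝ → ℝ := fun t => t ^ (α - 1) / (1 - α)
  have hf := strictConvexOn_rpow_sub_one_div hα1 hα2
  have hfd := (hasDerivAt_rpow_sub_one_div hα1 ha).differentiableAt
  obtain ⟨A, B, hfb, hfa, hlt⟩ : ∃ A B : ℝ, (0 < b → f b = A + B * b) ∧ f a = A + B * a ∧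
      ∀ t > 0, t < b ∨ a < t → A + B * t < f t := by
    rcases hb.eq_or_lt with rfl | hb
    · obtain ⟨A, B, -, hfa, hlt⟩ := hf.exists_affine_lt_off_Icc ha ha le_rfl hfd
      exact ⟨A, B, fun h => (lt_irrefl 0 h).elim, hfa,
        fun t ht h => hlt t ht (h.imp_left fun h => (ht.not_gt h).elim)⟩
    · obtain ⟨A, B, hfb, hfa, hlt⟩ := hf.exists_affine_lt_off_Icc hb ha hba hfd
      exact ⟨A, B, fun _ => hfb, hfa, hlt⟩
  refine ⟨A, B, fun t ht hgap => ?_⟩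
  rcases ht.eq_or_lt with rfl | ht
  · simp [zero_rpow hα0.ne']
  have hmul : t ^ α / (1 - α) = t * f t := by
    simp only [f]; rw [rpow_sub_one ht.ne']; field_simp
  have hline : A * t + B * t ^ 2 = t * (A + B * t) := by ring
  rw [hmul, hline]
  by_cases hab : t = a ∨ t = b
  · have heq : f t = A + B * t := by
      rcases hab with rfl | rfl
      exacts [hfa, hfb ht]
    simp [heq, hab]
  · push Not at hab
    have hlt' := hlt t ht (hgap.imp (·.lt_of_ne hab.2) (·.lt_of_ne' hab.1))
    have hlt'' := mul_lt_mul_of_pos_left hlt' ht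
    exact ⟨hlt''.le, by simp [hlt''.ne', hab, ht.ne']⟩

theorem sum_sq_le_sq_add_one_sub_sq {ι : Type*} [Fintype ι] {x : ι → ℝ} (hx : ∀ i, 0 ≤ x i)
    (hsum : ∑ i, x i = 1) (k : ι) : ∑ i, x i ^ 2 ≤ x k ^ 2 + (1 - x k) ^ 2 := by
  classical
  rw [← add_sum_erase _ _ (mem_univ k)] at hsum ⊢
  have h := sum_sq_le_sq_sum_of_nonneg (s := univ.erase k) fun i _ => hx i
  rw [show ∑ i ∈ univ.erase k, x i = 1 - x k by linarith] at h
  linarith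

theorem le_or_le_of_sum_sq_eq {ι : Type*} [Fintype ι] {x : ι → ℝ} {a b : ℝ}
    (hx : ∀ i, 0 ≤ x i) (hsum : ∑ i, x i = 1) (hsq : ∑ i, x i ^ 2 = a ^ 2 + b ^ 2)
    (hab : a + b = 1) (k : ι) : x k ≤ b ∨ a ≤ x k := by
  have h := sum_sq_le_sq_add_one_sub_sq hx hsum k
  have hprod : 0 ≤ (x k - a) * (x k - b) := by
    rw [hsq, ← hab] at h; nlinarith
  by_contra! hk
  exact (mul_neg_of_neg_of_pos (sub_neg.2 hk.2) (sub_pos.2 hk.1)).not_ge hprod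

theorem add_rpow_div_le_sum_rpow_div {ι : Type*} [Fintype ι] {α a b : ℝ} (hα0 : 0 < α)
    (hα2 : α < 2) (hα1 : α ≠ 1) (hb : 0 ≤ b) (hba : b ≤ a) (hab : a + b = 1) {x : ι → ℝ}
    (hx : ∀ i, 0 ≤ x i) (hsum : ∑ i, x i = 1) (hsq : ∑ i, x i ^ 2 = a ^ 2 + b ^ 2) :
    (a ^ α + b ^ α) / (1 - α) ≤ (∑ i, x i ^ α) / (1 - α) ∧
      ((∑ i, x i ^ α) / (1 - α) = (a ^ α + b ^ α) / (1 - α) ↔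
        ∀ i, x i = 0 ∨ x i = a ∨ x i = b) := by
  obtain ⟨A, B, hAB⟩ := exists_mul_add_mul_sq_le_rpow_div hα0 hα2 hα1 hb hba (by linarith)
  have hx' i := hAB (x i) (hx i) (le_or_le_of_sum_sq_eq hx hsum hsq hab i)
  have hendpoints : a ^ α / (1 - α) + b ^ α / (1 - α) = ∑ i, (A * x i + B * x i ^ 2) := by
    rw [sum_add_distrib, ← mul_sum, ← mul_sum, hsum, hsq,
      (hAB a (by linarith) (Or.inr le_rfl)).2.2 (by simp),
      (hAB b hb (Or.inl le_rfl)).2.2 (by simp), ← hab]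
    ring
  rw [add_div, sum_div, hendpoints, eq_comm, sum_eq_sum_iff_of_le fun i _ => (hx' i).1]
  exact ⟨sum_le_sum fun i _ => (hx' i).1, by
    simpa only [Finset.mem_univ, forall_const] using forall_congr' fun i => eq_comm.trans (hx' i).2⟩

theorem eq_of_sorted_of_forall_eq_zero_or_eq_or_eq {x : Fin 4 → ℝ} {a b : ℝ}
    (hord : x 3 ≤ x 2 ∧ x 2 ≤ x 1 ∧ x 1 ≤ x 0) (hx : ∀ k, 0 ≤ x k)
    (hsum : ∑ k, x k = 1) (hsq : ∑ k, x k ^ 2 = a ^ 2 + b ^ 2) (hab : a + b = 1)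
    (hb : 0 ≤ b) (hba : b ≤ a) (hmem : ∀ k, x k = 0 ∨ x k = a ∨ x k = b) :
    x = ![a, b, 0, 0] := by
  rw [Fin.sum_univ_four] at hsum hsq
  obtain ⟨h32, h21, h10⟩ := hord
  have hvar : ∀ k, x k ≠ 0 → x k * (1 - x k) = a * b := by
    intro k hk
    rcases hmem k with h | h | h
    · exact absurd h hk
    all_goals rw [h, ← hab]; ring
  have h2 : x 2 = 0 := by
    by_contra h2
    have h0 : x 0 ≠ 0 := by linarith [(hx 2).lt_of_ne' h2]
    have h1 : x 1 ≠ 0 := by linarith [(hx 2).lt_of_ne' h2]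
    have hab0 : a * b = 0 := by
      nlinarith [hvar 0 h0, hvar 1 h1, hvar 2 h2, mul_nonneg hb (hb.trans hba),
        mul_nonneg (hx 3) (show 0 ≤ 1 - x 3 by linarith [hx 0, hx 1, hx 2])]
    have hone : ∀ k, x k ≠ 0 → x k = 1 := fun k hk => by
      have := hvar k hk
      rw [hab0, mul_eq_zero, sub_eq_zero] at this
      exact this.resolve_left hk |>.symm
    linarith [hone 0 h0, hone 1 h1, hone 2 h2, hx 3]
  have h3 : x 3 = 0 := le_antisymm (h2 ▸ h32) (hx 3)
  have h0 : x 0 = a := by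
    have hquad : (x 0 - a) * (x 0 - b) = 0 := by
      have : x 1 = a + b - x 0 := by linarith
      rw [h2, h3, this] at hsq; linear_combination hsq / 2
    rcases mul_eq_zero.1 hquad with h | h
    · linarith
    · linarith
  have h1 : x 1 = b := by linarith
  ext k
  fin_cases k <;> simp [h0, h1, h2, h3]

/-- For τ ∈ [0,1] and 0 < α < 2 (α ≠ 1), among all decreasing probability vectors
    (λ₀,…,λ₃) with linear entropy 2(1−Σλ²)=τ, the Tsallis α-entropy is minimized
    uniquely by λ = ((1+√(1−τ))/2, (1−√(1−τ))/2, 0, 0). -/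
theorem tsallis_min_distribution (τ : ℝ) (hτ0 : 0 ≤ τ) (hτ1 : τ ≤ 1)
    (α : ℝ) (hα0 : 0 < α) (hα2 : α < 2) (hα1 : α ≠ 1)
    (lam : Fin 4 → ℝ)
    (hord : lam 3 ≤ lam 2 ∧ lam 2 ≤ lam 1 ∧ lam 1 ≤ lam 0)
    (hpos : ∀ k, 0 ≤ lam k)
    (hsum : ∑ k, lam k = 1)
    (hlin : 2 * (1 - ∑ k, (lam k)^2) = τ) :
    let lamstar : Fin 4 → ℝ :=
      ![(1 + Real.sqrt (1 - τ))/2, (1 - Real.sqrt (1 - τ))/2, 0, 0]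
    (1/(1-α)) * ((∑ k, lamstar k ^ α) - 1) ≤ (1/(1-α)) * ((∑ k, lam k ^ α) - 1) ∧
    ((1/(1-α)) * ((∑ k, lam k ^ α) - 1) = (1/(1-α)) * ((∑ k, lamstar k ^ α) - 1)
      ↔ lam = lamstar) := by
  dsimp only
  have hr0 : 0 ≤ √(1 - τ) := sqrt_nonneg _
  have hr1 : √(1 - τ) ≤ 1 := sqrt_le_one.mpr (by linarith)
  have hr2 : √(1 - τ) ^ 2 = 1 - τ := sq_sqrt (by linarith)
  generalize √(1 - τ) = r at hr0 hr1 hr2 ⊢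
  have hab : (1 + r) / 2 + (1 - r) / 2 = 1 := by ring
  have hba : (1 - r) / 2 ≤ (1 + r) / 2 := by linarith
  have hb : 0 ≤ (1 - r) / 2 := by linarith
  have hsq : ∑ k, lam k ^ 2 = ((1 + r) / 2) ^ 2 + ((1 - r) / 2) ^ 2 := by
    linear_combination -hlin / 2 - hr2 / 2
  generalize (1 + r) / 2 = a at hab hba hsq ⊢
  generalize (1 - r) / 2 = b at hab hba hb hsq ⊢
  have hstar : ∑ k, ![a, b, 0, 0] k ^ α = a ^ α + b ^ α := by
    simp [Fin.sum_univ_four, zero_rpow hα0.ne']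
  obtain ⟨hle, heq⟩ := add_rpow_div_le_sum_rpow_div hα0 hα2 hα1 hb hba hab hpos hsum hsq
  rw [← hstar] at hle heq
  have hform : ∀ S : ℝ, 1 / (1 - α) * (S - 1) = S / (1 - α) - 1 / (1 - α) := fun S => by ring
  simp only [hform, sub_le_sub_iff_right, sub_left_inj]
  exact ⟨hle, fun h => eq_of_sorted_of_forall_eq_zero_or_eq_or_eq hord hpos hsum hsq hab hb hba
    (heq.1 h), fun h => h ▸ rfl⟩
end
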